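/- Let (G,N,M) be a Camina triple in a finite group G, and let H ≤ G be a subgroup with G = HN and H ∩ M = 1. Then (G,N,M) is a Frobenius triple if and only if (HM, (H ∩ N)M, M) is a Frobenius triple. -/

import Mathlib

/-!
Put `K = HM`. As `M` is normal and `M ≤ N`, Dedekind's law gives `(H ∩ N)M = K ∩ N`, and
`G = KN`, so the second triple is `(K, K ∩ N, M)` and `|G : N| = |K : K ∩ N|`. The Frobenius
property passes from `G` to `K` directly. Conversely, if `(K, K ∩ N, M)` is a Frobenius triple and
`p` divides `|M|`, a Sylow `p`-subgroup of `K` acting on `M` by conjugation fixes some `b ≠ 1`, so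
it lies in `C_K(b) ≤ K ∩ N`; hence `|M|` is coprime to `|G : N|`. If now `g ∉ N` centralises
`1 ≠ x ∈ M`, stripping from `g` the primes dividing `|M|` keeps it outside `N` and makes its order
prime to `o(x)`; the Camina condition makes `g` conjugate to `gx`, of order `o(g) o(x)`, so `x = 1`.
-/

/-- `(G, N, M)` is a Frobenius triple: `M` and `N` are nontrivial proper normal
subgroups of `G` with `M ≤ N`, and `C_G(x) ≤ N` for every nonidentity `x ∈ M`. -/
def IsFrobeniusTriple {G : Type*} [Group G] (N M : Subgroup G) : Prop :=
  N.Normal ∧ M.Normal ∧ N ≠ ⊥ ∧ N ≠ ⊤ ∧ M ≠ ⊥ ∧ M ≠ ⊤ ∧ M ≤ N ∧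
    ∀ x ∈ M, x ≠ 1 → Subgroup.centralizer {x} ≤ N

/-- `(G, N, M)` is a Camina triple: `M` and `N` are nontrivial proper normal
subgroups of `G` with `M ≤ N`, and every `g ∈ G \ N` is conjugate to `g * m`
for every `m ∈ M`. -/
def IsCaminaTriple {G : Type*} [Group G] (N M : Subgroup G) : Prop :=
  N.Normal ∧ M.Normal ∧ N ≠ ⊥ ∧ N ≠ ⊤ ∧ M ≠ ⊥ ∧ M ≠ ⊤ ∧ M ≤ N ∧
    ∀ g : G, g ∉ N → ∀ m ∈ M, IsConj g (g * m)

open Subgroup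

section

variable {G : Type*} [Group G]

theorem Subgroup.inf_sup_eq_sup_inf_of_le {H N M : Subgroup G} [M.Normal] (hMN : M ≤ N) :
    (H ⊓ N) ⊔ M = (H ⊔ M) ⊓ N := by
  rw [← SetLike.coe_set_eq, mul_normal, inf_comm H N, inf_mul_assoc _ _ _ hMN, coe_inf, mul_normal,
    Set.inter_comm]

theorem eq_one_of_commute_of_isConj_mul {g x : G} (hcomm : Commute g x) (hconj : IsConj g (g * x))
    (hco : (orderOf g).Coprime (orderOf x)) : x = 1 := by
  obtain ⟨c, hc⟩ := hconj
  have hord : orderOf g = orderOf g * orderOf x := by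
    rw [← hcomm.orderOf_mul_eq_mul_orderOf_of_coprime hco, hc.orderOf_eq]
  exact orderOf_eq_one_iff.mp (Nat.Coprime.eq_one_of_dvd hco.symm (Dvd.intro_left _ hord.symm))

theorem pow_notMem_of_coprime_index {N : Subgroup G} [N.Normal] {g : G} {n : ℕ}
    (hn : n.Coprime N.index) (hg : g ∉ N) : g ^ n ∉ N := by
  intro hgn
  have : (g : G ⧸ N) ^ n.gcd N.index = 1 :=
    pow_gcd_eq_one.mpr ⟨(QuotientGroup.eq_one_iff _).mpr hgn,
      (QuotientGroup.eq_one_iff _).mpr (N.pow_index_mem g)⟩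
  rw [hn.gcd_eq_one, pow_one, QuotientGroup.eq_one_iff] at this
  exact hg this

theorem exists_pow_notMem_coprime_orderOf [Finite G] {N : Subgroup G} [N.Normal] {m : ℕ}
    (hm : N.index.Coprime m) {g : G} (hg : g ∉ N) :
    ∃ n, g ^ n ∉ N ∧ (orderOf (g ^ n)).Coprime m := by
  induction h : orderOf g using Nat.strong_induction_on generalizing g with
  | _ k ih =>
  by_cases hco : (orderOf g).Coprime m
  · exact ⟨1, by simpa using hg, by simpa using hco⟩
  obtain ⟨q, hq, hqg, hqm⟩ := Nat.Prime.not_coprime_iff_dvd.mp hco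
  have hgq : g ^ q ∉ N := pow_notMem_of_coprime_index (hm.coprime_dvd_right hqm).symm hg
  have hlt : orderOf (g ^ q) < k := by
    rw [orderOf_pow_of_dvd hq.ne_zero hqg, ← h]
    exact Nat.div_lt_self (orderOf_pos g) hq.one_lt
  obtain ⟨n, hn, hnm⟩ := ih _ hlt hgq rfl
  exact ⟨q * n, by rwa [pow_mul], by rwa [pow_mul]⟩

theorem centralizer_le_of_camina_of_coprime [Finite G] {N M : Subgroup G} [N.Normal]
    (hcam : ∀ g : G, g ∉ N → ∀ m ∈ M, IsConj g (g * m)) (hco : (Nat.card M).Coprime N.index)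
    {x : G} (hx : x ∈ M) (hx1 : x ≠ 1) : centralizer {x} ≤ N := by
  intro g hg
  by_contra hgN
  obtain ⟨n, hn, hno⟩ := exists_pow_notMem_coprime_orderOf hco.symm hgN
  have hcomm : Commute (g ^ n) x := Commute.pow_left (mem_centralizer_singleton_iff.mp hg) n
  exact hx1 (eq_one_of_commute_of_isConj_mul hcomm (hcam _ hn x hx)
    (hno.coprime_dvd_right (M.orderOf_dvd_natCard hx)))

theorem IsPGroup.exists_ne_one_le_centralizer {p : ℕ} [Fact p.Prime] {P M : Subgroup G}
    [M.Normal] [Finite M] (hP : IsPGroup p P) (hpM : p ∣ Nat.card M) :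
    ∃ b ∈ M, b ≠ 1 ∧ P ≤ centralizer {b} := by
  let P' : Subgroup (ConjAct G) := P.map ConjAct.toConjAct.toMonoidHom
  have hP' : IsPGroup p ↥P' := hP.map _
  have h1 : (1 : M) ∈ MulAction.fixedPoints ↥P' M := fun c => smul_one _
  obtain ⟨b, hb, hb1⟩ := hP'.exists_fixed_point_of_prime_dvd_card_of_fixed_point M hpM h1
  refine ⟨b, b.2, fun h => hb1 (Subtype.ext h.symm), fun g hg => ?_⟩
  have hgb := congrArg Subtype.val (hb ⟨ConjAct.toConjAct g, mem_map_of_mem _ hg⟩)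
  rw [Subgroup.smul_def, ConjAct.Subgroup.val_conj_smul, ConjAct.toConjAct_smul,
    mul_inv_eq_iff_eq_mul] at hgb
  exact mem_centralizer_singleton_iff.mpr hgb

theorem coprime_card_index_of_centralizer_le [Finite G] {L M : Subgroup G} [M.Normal]
    (hML : ∀ x ∈ M, x ≠ 1 → centralizer {x} ≤ L) : (Nat.card M).Coprime L.index := by
  refine Nat.coprime_of_dvd fun p hp hpM hpL => ?_
  have : Fact p.Prime := ⟨hp⟩
  obtain ⟨P⟩ := Sylow.nonempty (p := p) (G := G)
  obtain ⟨b, hb, hb1, hPb⟩ := P.isPGroup'.exists_ne_one_le_centralizer hpM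
  exact P.not_dvd_index (hpL.trans (index_dvd_of_le (hPb.trans (hML b hb hb1))))

theorem IsFrobeniusTriple.subgroupOf {N M K : Subgroup G} (hF : IsFrobeniusTriple N M)
    (hMK : M ≤ K) (hKN : ¬ K ≤ N) : IsFrobeniusTriple (N.subgroupOf K) (M.subgroupOf K) := by
  obtain ⟨hN, hM, -, -, hMbot, -, hMN, hcent⟩ := hF
  have hM'bot : M.subgroupOf K ≠ ⊥ := fun h =>
    hMbot ((subgroupOf_eq_bot.mp h).eq_bot_of_le hMK)
  have hN'top : N.subgroupOf K ≠ ⊤ := fun h => hKN (subgroupOf_eq_top.mp h)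
  have hM'N' : M.subgroupOf K ≤ N.subgroupOf K := subgroupOf_mono K hMN
  refine ⟨hN.subgroupOf K, hM.subgroupOf K, ne_bot_of_le_ne_bot hM'bot hM'N', hN'top, hM'bot,
    ne_top_of_le_ne_top hN'top hM'N', hM'N', fun x hx hx1 y hy => ?_⟩
  refine hcent x hx (fun h => hx1 (Subtype.ext h)) (mem_centralizer_singleton_iff.mpr ?_)
  exact congrArg Subtype.val (mem_centralizer_singleton_iff.mp hy)

theorem IsCaminaTriple.isFrobeniusTriple_of_subgroupOf [Finite G] {N M K : Subgroup G}
    (hC : IsCaminaTriple N M) (hMK : M ≤ K) (hKN : K ⊔ N = ⊤)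
    (hF : IsFrobeniusTriple (N.subgroupOf K) (M.subgroupOf K)) : IsFrobeniusTriple N M := by
  obtain ⟨hN, hM, hNbot, hNtop, hMbot, hMtop, hMN, hcam⟩ := hC
  obtain ⟨-, hM', -, -, -, -, -, hcent⟩ := hF
  have hcard : Nat.card (M.subgroupOf K) = Nat.card M :=
    Nat.card_congr (subgroupOfEquivOfLe hMK).toEquiv
  have hindex : (N.subgroupOf K).index = N.index := by
    rw [← relIndex, ← relIndex_sup_right, hKN, relIndex_top_right]
  have hco := coprime_card_index_of_centralizer_le hcent
  rw [hcard, hindex] at hco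
  exact ⟨hN, hM, hNbot, hNtop, hMbot, hMtop, hMN, fun x hx hx1 =>
    centralizer_le_of_camina_of_coprime hcam hco hx hx1⟩

theorem IsCaminaTriple.isFrobeniusTriple_iff_subgroupOf [Finite G] {N M K : Subgroup G}
    (hC : IsCaminaTriple N M) (hMK : M ≤ K) (hKN : K ⊔ N = ⊤) :
    IsFrobeniusTriple N M ↔ IsFrobeniusTriple (N.subgroupOf K) (M.subgroupOf K) :=
  ⟨fun hF => hF.subgroupOf hMK fun h => hC.2.2.2.1 (by rwa [sup_eq_right.mpr h] at hKN),
    hC.isFrobeniusTriple_of_subgroupOf hMK hKN⟩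

end

theorem camina_frobenius_triple_iff_restriction_general {G : Type*} [Group G] [Fintype G]
    (N M : Subgroup G) (hC : IsCaminaTriple N M) (H : Subgroup G)
    (hHN : ∀ g : G, ∃ h ∈ H, ∃ n ∈ N, g = h * n) :
    IsFrobeniusTriple N M ↔
      IsFrobeniusTriple (((H ⊓ N) ⊔ M).subgroupOf (H ⊔ M)) (M.subgroupOf (H ⊔ M)) := by
  have hKN : H ⊔ M ⊔ N = ⊤ := by
    refine eq_top_iff.mpr fun g _ => ?_
    obtain ⟨h, hh, n, hn, rfl⟩ := hHN g
    exact mul_mem (mem_sup_left (mem_sup_left hh)) (mem_sup_right hn)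
  have hM : M.Normal := hC.2.1
  have hMN : M ≤ N := hC.2.2.2.2.2.2.1
  rw [inf_sup_eq_sup_inf_of_le hMN, inf_subgroupOf_left]
  exact hC.isFrobeniusTriple_iff_subgroupOf le_sup_right hKN

theorem camina_frobenius_triple_iff_restriction {G : Type*} [Group G] [Fintype G]
    (N M : Subgroup G) (hC : IsCaminaTriple N M) (H : Subgroup G)
    (hHN : ∀ g : G, ∃ h ∈ H, ∃ n ∈ N, g = h * n) (hHM : H ⊓ M = ⊥) :
    IsFrobeniusTriple N M ↔
      IsFrobeniusTriple (((H ⊓ N) ⊔ M).subgroupOf (H ⊔ M)) (M.subgroupOf (H ⊔ M)) :=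
  camina_frobenius_triple_iff_restriction_general N M hC H hHN
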